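/- Let k ≥ 1 be an integer and let Π_μ be a Poisson random variable with mean μ > 0. Then for every integer m ≥ k, |∑_{s=k}^{m} (-1)^{s-k} C(s-1, k-1) μ^s / s! − P(Π_μ ≥ k)| ≤ C(m, k-1) μ^{m+1} / (m+1)!. -/

import Mathlib

/-!
For every `N ∈ ℕ` the Bonferroni truncation inequality
`|1{N ≥ k} - ∑_{s=k}^m (-1)^(s-k) C(s-1,k-1) C(N,s)| ≤ C(m,k-1) C(N,m+1)` holds; weighting it
by the Poisson probabilities and using the factorial moments `E[C(Π_μ, s)] = μ^s / s!` gives the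
theorem.

For the pointwise inequality, let `S_d` be the sum of the first `d` terms. The signed error
`(-1)^d (1{N ≥ k} - S_d)` satisfies, by Pascal's rule in `N` and in `k`, a recursion in `N` with
nonnegative coefficients, so it is nonnegative. The errors after `d` and after `d + 1` terms add up
to the `(d+1)`-st term, so each of them is bounded by it.
-/

open Finset Real Nat

namespace Bonferroni

/-- The terms are reindexed by `s = k + i`, so that `k.multichoose i = C(s-1, k-1)`. For `k = 0`
the coefficient is the indicator of `i = 0`, which makes Pascal's rule in `k` uniform. -/
def sum (k d n : ℕ) : ℤ :=
  ∑ i ∈ range d, (-1) ^ i * (k.multichoose i : ℤ) * (n.choose (k + i) : ℤ)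

def error (k d n : ℕ) : ℤ :=
  (-1) ^ d * ((if k ≤ n then 1 else 0) - sum k d n)

lemma sum_succ (k d n : ℕ) :
    sum k (d + 1) n = sum k d n + (-1) ^ d * (k.multichoose d : ℤ) * (n.choose (k + d) : ℤ) :=
  sum_range_succ _ _

lemma sum_zero_left (d n : ℕ) : sum 0 (d + 1) n = 1 := by
  simp [sum, sum_range_succ', Nat.multichoose_zero_succ, Nat.multichoose_zero_right]

lemma sum_succ_succ_succ (k d n : ℕ) :
    sum (k + 1) (d + 1) (n + 1) = sum (k + 1) (d + 1) n + sum k (d + 1) n - sum (k + 1) d n := by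
  have pascal_n : sum (k + 1) (d + 1) (n + 1) = sum (k + 1) (d + 1) n +
      ∑ i ∈ range (d + 1), (-1) ^ i * ((k + 1).multichoose i : ℤ) * (n.choose (k + i) : ℤ) := by
    simp only [sum, ← sum_add_distrib, add_right_comm k 1, Nat.choose_succ_succ']
    push_cast
    exact sum_congr rfl fun i _ => by ring
  have pascal_k :
      ∑ i ∈ range (d + 1), (-1) ^ i * ((k + 1).multichoose i : ℤ) * (n.choose (k + i) : ℤ) =
        sum k (d + 1) n - sum (k + 1) d n := by
    simp only [sum, sum_range_succ' _ d, Nat.multichoose_succ_succ, Nat.multichoose_zero_right,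
      add_right_comm k 1, ← add_assoc]
    push_cast
    rw [add_sub_right_comm, ← sum_sub_distrib]
    exact congrArg (· + _) (sum_congr rfl fun i _ => by ring)
  rw [pascal_n, pascal_k]
  ring

lemma error_succ_succ_succ (k d n : ℕ) :
    error (k + 1) (d + 1) (n + 1) =
      error (k + 1) (d + 1) n + error k (d + 1) n + error (k + 1) d n := by
  simp only [error, sum_succ_succ_succ, add_le_add_iff_right, pow_succ]
  ring

lemma error_zero_left_nonneg (d n : ℕ) : 0 ≤ error 0 d n := by
  cases d with
  | zero => simp [error, sum]
  | succ d => simp [error, sum_zero_left]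

lemma error_zero_right_nonneg (k n : ℕ) : 0 ≤ error k 0 n := by
  simp only [error, sum, range_zero, sum_empty]
  split_ifs <;> norm_num

theorem error_nonneg (k d n : ℕ) : 0 ≤ error k d n := by
  induction n generalizing k d with
  | zero =>
    cases k with
    | zero => exact error_zero_left_nonneg d 0
    | succ k => simp [error, sum, Nat.choose_eq_zero_of_lt]
  | succ n ih =>
    match k, d with
    | 0, d => exact error_zero_left_nonneg d _
    | k, 0 => exact error_zero_right_nonneg k _
    | k + 1, d + 1 =>
      rw [error_succ_succ_succ]
      linarith [ih (k + 1) (d + 1), ih k (d + 1), ih (k + 1) d]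

lemma error_add_error_succ (k d n : ℕ) :
    error k d n + error k (d + 1) n = k.multichoose d * n.choose (k + d) := by
  have hsq : ((-1 : ℤ) ^ d) ^ 2 = 1 := by rw [← pow_mul, pow_mul', neg_one_sq, one_pow]
  simp only [error, sum_succ, pow_succ]
  linear_combination ((k.multichoose d : ℤ) * n.choose (k + d)) * hsq

theorem abs_indicator_sub_sum_le (k d n : ℕ) :
    |(if k ≤ n then 1 else 0) - sum k d n| ≤ k.multichoose d * n.choose (k + d) := by
  have h : |(if k ≤ n then 1 else 0) - sum k d n| = error k d n := by
    rw [← abs_of_nonneg (error_nonneg k d n), error, abs_mul, abs_pow, abs_neg, abs_one, one_pow,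
      one_mul]
  rw [h, ← error_add_error_succ]
  linarith [error_nonneg k (d + 1) n]

theorem sum_eq_sum_Icc (k m n : ℕ) (hk : 1 ≤ k) :
    sum k (m + 1 - k) n =
      ∑ s ∈ Icc k m, (-1) ^ (s - k) * ((s - 1).choose (k - 1) : ℤ) * n.choose s := by
  obtain ⟨j, rfl⟩ : ∃ j, k = j + 1 := ⟨k - 1, by omega⟩
  rw [← Ico_add_one_right_eq_Icc, sum_Ico_eq_sum_range, sum]
  refine sum_congr rfl fun i _ => ?_
  rw [Nat.multichoose_eq, Nat.add_sub_cancel_left, show j + 1 + i - 1 = j + i by omega,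
    Nat.add_sub_cancel, Nat.choose_symm_add]

end Bonferroni

theorem abs_indicator_sub_bonferroni_le (k m n : ℕ) (hk : 1 ≤ k) (hm : k ≤ m) :
    |(if k ≤ n then 1 else 0) -
        ∑ s ∈ Icc k m, (-1) ^ (s - k) * ((s - 1).choose (k - 1) : ℤ) * n.choose s| ≤
      m.choose (k - 1) * n.choose (m + 1) := by
  have h := Bonferroni.abs_indicator_sub_sum_le k (m + 1 - k) n
  rwa [Bonferroni.sum_eq_sum_Icc k m n hk, Nat.multichoose_eq,
    show k + (m + 1 - k) - 1 = m by omega, show k + (m + 1 - k) = m + 1 by omega,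
    Nat.choose_symm_of_eq_add (show m = (m + 1 - k) + (k - 1) by omega)] at h

theorem abs_sub_le_of_hasSum {ι : Type*} {f g h : ι → ℝ} {a b c : ℝ} (hf : HasSum f a)
    (hg : HasSum g b) (hh : HasSum h c) (hfg : ∀ i, |f i - g i| ≤ h i) : |a - b| ≤ c := by
  have hd := hf.sub hg
  refine abs_le.2 ⟨?_, hasSum_le (fun i => le_of_abs_le (hfg i)) hd hh⟩
  exact hasSum_le (fun i => neg_le_of_abs_le (hfg i)) hh.neg hd

theorem hasSum_poisson_mul_choose (μ : ℝ) (s : ℕ) :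
    HasSum (fun n => exp (-μ) * μ ^ n / n ! * n.choose s) (μ ^ s / s !) := by
  have hbelow : ∑ n ∈ range s, exp (-μ) * μ ^ n / n ! * (n.choose s : ℝ) = 0 :=
    sum_eq_zero fun n hn => by simp [Nat.choose_eq_zero_of_lt (mem_range.1 hn)]
  have hshift (j : ℕ) : exp (-μ) * μ ^ (j + s) / (j + s)! * ((j + s).choose s : ℝ) =
      μ ^ s / s ! * (exp (-μ) * (μ ^ j / j !)) := by
    rw [← Nat.add_choose_mul_factorial_mul_factorial j s]
    push_cast
    have hchoose : ((j + s).choose s : ℝ) ≠ 0 := by exact_mod_cast (Nat.choose_pos (by omega)).ne'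
    field_simp
    ring
  have hexp : HasSum (fun j => μ ^ j / j !) (exp μ) := by
    rw [exp_eq_exp_ℝ]
    exact NormedSpace.expSeries_div_hasSum_exp μ
  rw [← hasSum_nat_add_iff' s, hbelow, sub_zero]
  simp only [hshift]
  have h := (hexp.mul_left (exp (-μ))).mul_left (μ ^ s / s !)
  rwa [← exp_add, neg_add_cancel, exp_zero, mul_one] at h

theorem hasSum_poisson_mul_sum_choose (μ : ℝ) (t : Finset ℕ) (a : ℕ → ℝ) :
    HasSum (fun n => exp (-μ) * μ ^ n / n ! * ∑ s ∈ t, a s * n.choose s)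
      (∑ s ∈ t, a s * μ ^ s / s !) := by
  simp only [mul_sum]
  refine hasSum_sum fun s _ => ?_
  rw [mul_div_assoc]
  simpa only [mul_left_comm] using (hasSum_poisson_mul_choose μ s).mul_left (a s)

/-- Poisson Bonferroni bound: for a Poisson variable `Π_μ` with mean `μ > 0`
(whose upper-tail probability `P(Π_μ ≥ k)` is `∑_{n≥k} e^{−μ} μ^n/n!`),
`|∑_{s=k}^{m} (-1)^{s-k} C(s-1,k-1) μ^s/s! − P(Π_μ ≥ k)| ≤ C(m,k-1) μ^{m+1}/(m+1)!`. -/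
theorem stmt_8 (k m : ℕ) (hk : 1 ≤ k) (hm : k ≤ m) (μ : ℝ) (hμ : 0 < μ) :
    |(∑ s ∈ Finset.Icc k m,
        (-1 : ℝ) ^ (s - k) * ((s - 1).choose (k - 1) : ℝ) * μ ^ s / (s.factorial : ℝ))
        - ∑' n : ℕ, (if k ≤ n then Real.exp (-μ) * μ ^ n / (n.factorial : ℝ) else 0)|
      ≤ (m.choose (k - 1) : ℝ) * μ ^ (m + 1) / ((m + 1).factorial : ℝ) := by
  have hp (n : ℕ) : 0 ≤ exp (-μ) * μ ^ n / n.factorial := by positivity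
  have htail : Summable fun n => if k ≤ n then exp (-μ) * μ ^ n / n.factorial else 0 := by
    refine Summable.of_nonneg_of_le (fun n => ?_) (fun n => ?_)
      (by simpa using (hasSum_poisson_mul_choose μ 0).summable) <;>
    split_ifs <;> simp [hp]
  have hbonf := hasSum_poisson_mul_sum_choose μ (Icc k m)
    fun s => (-1) ^ (s - k) * ((s - 1).choose (k - 1) : ℝ)
  have hnext : HasSum
      (fun n => (m.choose (k - 1) : ℝ) * (exp (-μ) * μ ^ n / n.factorial * n.choose (m + 1)))
      ((m.choose (k - 1) : ℝ) * μ ^ (m + 1) / (m + 1).factorial) := by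
    rw [mul_div_assoc]
    exact (hasSum_poisson_mul_choose μ (m + 1)).mul_left _
  refine abs_sub_le_of_hasSum hbonf htail.hasSum hnext fun n => ?_
  have h : |(if k ≤ n then 1 else 0) -
      ∑ s ∈ Icc k m, (-1) ^ (s - k) * ((s - 1).choose (k - 1) : ℝ) * n.choose s| ≤
      m.choose (k - 1) * n.choose (m + 1) := by
    exact_mod_cast abs_indicator_sub_bonferroni_le k m n hk hm
  rw [← mul_boole, ← mul_sub, abs_mul, abs_of_nonneg (hp n), abs_sub_comm]
  exact (mul_le_mul_of_nonneg_left h (hp n)).trans_eq (mul_left_comm _ _ _)
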